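/- arXiv:2004.06204 — 3 statements merged into one kernel-verified Lean document; each statement's English description precedes it below -/
import Mathlib

section
/- Let N be a positive integer with N ≡ 3 (mod 8). Then the number of positive divisors of N that are congruent to 5 modulo 8 equals the number of positive divisors of N that are congruent to 7 modulo 8. -/
/-!
The involution `d ↦ N / d` of the divisors of `N` swaps the residues `5` and `7` modulo `8`:
since `5 * 7 ≡ 3 ≡ N` and `5`, `7` are units mod `8`, `d ≡ 5` forces `N / d ≡ 7` and conversely.
-/

open Finset

theorem Nat.ModEq.of_mul_eq_of_modEq {m N a b d e : ℕ} (hN : N.Coprime m)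
    (hab : a * b ≡ N [MOD m]) (hde : d * e = N) (he : e ≡ a [MOD m]) : d ≡ b [MOD m] := by
  have ha : Nat.gcd m a = 1 :=
    Nat.Coprime.coprime_mul_right (hab.gcd_eq.trans hN) |>.symm
  refine Nat.ModEq.cancel_right_of_coprime ha ?_
  calc d * a ≡ d * e [MOD m] := he.symm.mul_left d
    _ = N := hde
    _ ≡ b * a [MOD m] := by rw [mul_comm b]; exact hab.symm

theorem Nat.div_modEq_iff_modEq_of_mem_divisors {m N a b d : ℕ} (hN : N.Coprime m)
    (hab : a * b ≡ N [MOD m]) (hd : d ∈ N.divisors) : N / d ≡ a [MOD m] ↔ d ≡ b [MOD m] := by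
  have hde : d * (N / d) = N := Nat.mul_div_cancel' (Nat.dvd_of_mem_divisors hd)
  refine ⟨.of_mul_eq_of_modEq hN hab hde, fun hdb => ?_⟩
  exact .of_mul_eq_of_modEq hN (by rwa [mul_comm]) (by rwa [mul_comm]) hdb

theorem Nat.card_divisors_filter_modEq_eq {m N a b : ℕ} (hN : N.Coprime m)
    (hab : a * b ≡ N [MOD m]) :
    #{d ∈ N.divisors | d ≡ a [MOD m]} = #{d ∈ N.divisors | d ≡ b [MOD m]} := by
  rw [card_filter, card_filter, ← Nat.sum_div_divisors]
  refine sum_congr rfl fun d hd => ?_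
  simp only [Nat.div_modEq_iff_modEq_of_mem_divisors hN hab hd]

theorem card_divisors_five_mod_eight_eq_card_divisors_seven_mod_eight_general
    (N : ℕ) (h : N % 8 = 3) :
    (N.divisors.filter fun d => d % 8 = 5).card =
      (N.divisors.filter fun d => d % 8 = 7).card := by
  have hN : N.Coprime 8 := by
    rw [Nat.coprime_comm, Nat.Coprime, Nat.gcd_rec, h]; rfl
  have h35 : 5 * 7 ≡ N [MOD 8] := h.symm
  -- `d ≡ 5 [MOD 8]` unfolds to `d % 8 = 5 % 8`, which reduces to `d % 8 = 5`.
  exact Nat.card_divisors_filter_modEq_eq hN h35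

theorem card_divisors_five_mod_eight_eq_card_divisors_seven_mod_eight
    (N : ℕ) (hN : 0 < N) (h : N % 8 = 3) :
    (N.divisors.filter fun d => d % 8 = 5).card =
      (N.divisors.filter fun d => d % 8 = 7).card :=
  card_divisors_five_mod_eight_eq_card_divisors_seven_mod_eight_general N h
end

section
/- For every natural number N ≥ 0, the number of nonnegative integers a with N = a(a+1)/2, plus the number of integers b with N = 3b(3b−1)/2, plus the number of nonnegative integers c with N = 1 + 9c(c+1)/2, is even. Equivalently, modulo 2, #{a ∈ ℕ : N = a(a+1)/2} ≡ #{b ∈ ℤ : N = 3b(3b−1)/2} + #{c ∈ ℕ : N = 1 + 9c(c+1)/2} (mod 2). -/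
private lemma aux_sqrt (N m : ℕ) (hm : m * m = 8 * N + 1) :
    Nat.sqrt (8 * N + 1) = m := by
  rw [← hm, Nat.sqrt_eq]

private lemma b_unique (b b' : ℤ) (h : 3 * b * (3 * b - 1) = 3 * b' * (3 * b' - 1)) :
    b = b' := by
  have h2 : (b - b') * (3 * (b + b') - 1) * 3 = 0 := by linear_combination h
  rcases mul_eq_zero.mp h2 with h3 | h3
  · rcases mul_eq_zero.mp h3 with h4 | h4 <;> omega
  · omega

theorem triangular_plus_pentagonal_counts_even (N : ℕ) :
    ({a : ℕ | 2 * N = a * (a + 1)}.ncard +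
        {b : ℤ | (2 * N : ℤ) = 3 * b * (3 * b - 1)}.ncard +
        {c : ℕ | 2 * N = 2 + 9 * c * (c + 1)}.ncard) % 2 = 0 := by
  set s := Nat.sqrt (8 * N + 1) with hs
  have memA : ∀ a : ℕ, 2 * N = a * (a + 1) → (2 * a + 1) * (2 * a + 1) = 8 * N + 1 := by
    intro a h; nlinarith
  have memB : ∀ b : ℤ, (2 * N : ℤ) = 3 * b * (3 * b - 1) →
      (6 * b - 1).natAbs * (6 * b - 1).natAbs = 8 * N + 1 := by
    intro b h
    have h1 : (((6 * b - 1).natAbs * (6 * b - 1).natAbs : ℕ) : ℤ) = ((8 * N + 1 : ℕ) : ℤ) := by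
      push_cast
      rw [abs_mul_abs_self]
      nlinarith
    exact_mod_cast h1
  have memC : ∀ c : ℕ, 2 * N = 2 + 9 * c * (c + 1) →
      (6 * c + 3) * (6 * c + 3) = 8 * N + 1 := by
    intro c h; nlinarith
  by_cases hsq : s * s = 8 * N + 1
  · -- square case
    have hmod2 : s % 2 = 1 := by
      have h2 := Nat.mul_mod s s 2
      rw [hsq] at h2
      rcases Nat.mod_two_eq_zero_or_one s with h | h
      · rw [h] at h2; norm_num at h2; omega
      · exact h
    obtain ⟨a₀, ha₀s⟩ : ∃ a₀, s = 2 * a₀ + 1 := ⟨s / 2, by omega⟩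
    have hsq' : (2 * a₀ + 1) * (2 * a₀ + 1) = 8 * N + 1 := by rw [← ha₀s]; exact hsq
    have ha₀ : 2 * N = a₀ * (a₀ + 1) := by linarith [hsq']
    have hAset : {a : ℕ | 2 * N = a * (a + 1)} = {a₀} := by
      ext a
      simp only [Set.mem_setOf_eq, Set.mem_singleton_iff]
      constructor
      · intro h
        rcases lt_trichotomy a a₀ with hlt | he | hgt
        · nlinarith
        · exact he
        · nlinarith
      · rintro rfl; exact ha₀
    by_cases h3 : 3 ∣ s
    · -- b-set empty, c-set singleton
      have hBset : {b : ℤ | (2 * N : ℤ) = 3 * b * (3 * b - 1)} = ∅ := by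
        ext b
        simp only [Set.mem_setOf_eq, Set.mem_empty_iff_false, iff_false]
        intro h
        have hm := memB b h
        have hms : s = (6 * b - 1).natAbs := hs.trans (aux_sqrt N _ hm)
        have h3' : (3 : ℕ) ∣ (6 * b - 1).natAbs := hms ▸ h3
        have h3z : (3 : ℤ) ∣ (6 * b - 1) := by
          exact Int.dvd_natAbs.mp (Int.natCast_dvd_natCast.mpr h3')
        obtain ⟨t, ht⟩ := h3z
        omega
      obtain ⟨c₀, hc₀s⟩ : ∃ c₀, s = 6 * c₀ + 3 := ⟨s / 6, by omega⟩
      have hsqc : (6 * c₀ + 3) * (6 * c₀ + 3) = 8 * N + 1 := by rw [← hc₀s]; exact hsq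
      have hc₀ : 2 * N = 2 + 9 * c₀ * (c₀ + 1) := by linarith [hsqc]
      have hCset : {c : ℕ | 2 * N = 2 + 9 * c * (c + 1)} = {c₀} := by
        ext c
        simp only [Set.mem_setOf_eq, Set.mem_singleton_iff]
        constructor
        · intro h
          rcases lt_trichotomy c c₀ with hlt | he | hgt
          · nlinarith
          · exact he
          · nlinarith
        · rintro rfl; exact hc₀
      rw [hAset, hBset, hCset]
      simp
    · -- b-set singleton, c-set empty
      have hCset : {c : ℕ | 2 * N = 2 + 9 * c * (c + 1)} = ∅ := by
        ext c
        simp only [Set.mem_setOf_eq, Set.mem_empty_iff_false, iff_false]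
        intro h
        have hm := memC c h
        have hms : s = 6 * c + 3 := hs.trans (aux_sqrt N _ hm)
        exact h3 ⟨2 * c + 1, by omega⟩
      obtain ⟨k, hk⟩ : ∃ k, s = 6 * k + 1 ∨ s = 6 * k + 5 := ⟨s / 6, by omega⟩
      have hz : ((s : ℤ)) * (s : ℤ) = 8 * N + 1 := by exact_mod_cast hsq
      obtain ⟨b₀, hb₀⟩ : ∃ b₀ : ℤ, (2 * N : ℤ) = 3 * b₀ * (3 * b₀ - 1) := by
        rcases hk with hk | hk
        · refine ⟨-(k : ℤ), ?_⟩
          rw [hk] at hz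
          push_cast at hz
          linarith [hz]
        · refine ⟨(k : ℤ) + 1, ?_⟩
          rw [hk] at hz
          push_cast at hz
          linarith [hz]
      have hBset : {b : ℤ | (2 * N : ℤ) = 3 * b * (3 * b - 1)} = {b₀} := by
        ext b
        simp only [Set.mem_setOf_eq, Set.mem_singleton_iff]
        constructor
        · intro h
          exact b_unique b b₀ (by rw [← h, ← hb₀])
        · rintro rfl; exact hb₀
      rw [hAset, hBset, hCset]
      simp
  · -- non-square case: all three sets empty
    have hAset : {a : ℕ | 2 * N = a * (a + 1)} = ∅ := by
      ext a
      simp only [Set.mem_setOf_eq, Set.mem_empty_iff_false, iff_false]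
      intro h
      exact hsq (by rw [hs.trans (aux_sqrt N _ (memA a h))]; exact memA a h)
    have hBset : {b : ℤ | (2 * N : ℤ) = 3 * b * (3 * b - 1)} = ∅ := by
      ext b
      simp only [Set.mem_setOf_eq, Set.mem_empty_iff_false, iff_false]
      intro h
      exact hsq (by rw [hs.trans (aux_sqrt N _ (memB b h))]; exact memB b h)
    have hCset : {c : ℕ | 2 * N = 2 + 9 * c * (c + 1)} = ∅ := by
      ext c
      simp only [Set.mem_setOf_eq, Set.mem_empty_iff_false, iff_false]
      intro h
      exact hsq (by rw [hs.trans (aux_sqrt N _ (memC c h))]; exact memC c h)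
    rw [hAset, hBset, hCset]
    simp
end

section
/- Let N be a positive integer with N ≡ 3 (mod 8). Then the number of pairs (c, d) of positive integers with N = c² + 2d² is congruent modulo 2 to σ₀(N)/2, where σ₀(N) denotes the number of positive divisors of N (note σ₀(N) is even since such N is not a perfect square). -/
/-!
Let `S` be the finite set of positive integer triples `(x, y, z)` with `x² + 2yz = N`. The
involution `(x, y, z) ↦ (x, z, y)` of `S` fixes exactly the triples coming from representations
`N = c² + 2d²`. A Zagier-type piecewise linear involution of `S` fixes exactly the triples
`(x, x, z)`, i.e. the factorisations `N = x (x + 2z)` with `x < x + 2z`; since `N` is not a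
square these are half of all factorisations. Both fixed-point counts have the parity of `#S`.

The congruence `N ≡ 3 (mod 8)` forces all coordinates of a triple in `S` to be odd, which keeps
the second involution inside `S`, and it excludes that involution's other potential fixed points
`(x, 2x + z, z)`, for which `N = (x + 2z)² - 2z²`.
-/

open Finset

theorem Finset.card_filter_fixed_modEq_two {α : Type*} [DecidableEq α] (s : Finset α)
    {g : α → α} (hg : ∀ a ∈ s, g a ∈ s) (hgg : ∀ a ∈ s, g (g a) = a) :
    #{a ∈ s | g a = a} ≡ #s [MOD 2] := by
  have hmoved : ((#{a ∈ s | ¬ g a = a} : ℕ) : ZMod 2) = 0 := by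
    rw [card_eq_sum_ones, Nat.cast_sum]
    refine sum_involution (fun a _ => g a) (fun _ _ => by decide)
      (fun a ha _ => (mem_filter.1 ha).2) (fun a ha => ?_) (fun a ha => hgg a (mem_filter.1 ha).1)
    obtain ⟨has, hga⟩ := mem_filter.1 ha
    exact mem_filter.2 ⟨hg a has, by rw [hgg a has]; exact Ne.symm hga⟩
  have hsplit := card_filter_add_card_filter_not (s := s) (p := fun a => g a = a)
  have := (ZMod.natCast_eq_zero_iff _ 2).1 hmoved
  unfold Nat.ModEq
  omega

theorem Nat.card_divisors_eq_two_mul_card_filter_lt {n : ℕ} (hn : ¬ IsSquare n) :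
    #n.divisors = 2 * #{p ∈ n.divisorsAntidiagonal | p.1 < p.2} := by
  have hswap : #{p ∈ n.divisorsAntidiagonal | p.1 < p.2} =
      #{p ∈ n.divisorsAntidiagonal | ¬ p.1 < p.2} := by
    conv_lhs => rw [← Nat.map_swap_divisorsAntidiagonal, filter_map, card_map]
    congr 1
    refine filter_congr fun p hp => ?_
    have hne : p.1 ≠ p.2 := fun h =>
      hn ⟨p.1, by rw [← (Nat.mem_divisorsAntidiagonal.1 hp).1, h]⟩
    simp only [Function.comp, Equiv.coe_toEmbedding, Equiv.coe_prodComm, Prod.fst_swap,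
      Prod.snd_swap]
    omega
  have hcard : #n.divisors = #n.divisorsAntidiagonal := by
    rw [← Nat.map_div_right_divisors, card_map]
  rw [hcard, ← card_filter_add_card_filter_not (p := fun p : ℕ × ℕ => p.1 < p.2), ← hswap, two_mul]

theorem Int.sq_sub_two_mul_sq_emod_eight_ne_three (a b : ℤ) : (a ^ 2 - 2 * b ^ 2) % 8 ≠ 3 := by
  have key : ∀ a b : ZMod 8, a ^ 2 - 2 * b ^ 2 ≠ 3 := by decide
  intro h
  apply key a b
  exact_mod_cast (ZMod.intCast_eq_intCast_iff' (a ^ 2 - 2 * b ^ 2) 3 8).2 h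

theorem Int.emod_two_eq_one_of_sq_add_two_mul_emod_four {x y z : ℤ}
    (h : (x ^ 2 + 2 * y * z) % 4 = 3) : x % 2 = 1 ∧ y % 2 = 1 ∧ z % 2 = 1 := by
  have key : ∀ a b c : ZMod 4, a ^ 2 + 2 * b * c = 3 →
      a.val % 2 = 1 ∧ b.val % 2 = 1 ∧ c.val % 2 = 1 := by decide
  have h4 : ((x ^ 2 + 2 * y * z : ℤ) : ZMod 4) = 3 :=
    (ZMod.intCast_eq_intCast_iff' _ 3 4).2 h
  push_cast at h4
  have hx := ZMod.val_intCast (n := 4) x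
  have hy := ZMod.val_intCast (n := 4) y
  have hz := ZMod.val_intCast (n := 4) z
  have := key _ _ _ h4
  omega

def zagierMap : ℤ × ℤ × ℤ → ℤ × ℤ × ℤ
  | (x, y, z) =>
    if 2 * x + 2 * z < y then (x + 2 * z, z, y - 2 * x - 2 * z)
    else if 2 * y < x then (x - 2 * y, 2 * x - 2 * y + z, y)
    else if 2 * y < 2 * x + z then (2 * y - x, y, 2 * x - 2 * y + z)
    else if 2 * y < 3 * x + 2 * z then
      (3 * x - 2 * y + 2 * z, 2 * x - y + 2 * z, 2 * y - 2 * x - z)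
    else (2 * y - 3 * x - 2 * z, 2 * y - 2 * x - z, 2 * x - y + 2 * z)

theorem zagierMap_sq_add_two_mul (x y z : ℤ) :
    (zagierMap (x, y, z)).1 ^ 2 + 2 * (zagierMap (x, y, z)).2.1 * (zagierMap (x, y, z)).2.2 =
      x ^ 2 + 2 * y * z := by
  rw [zagierMap]
  split_ifs <;> ring

-- Odd coordinates keep every triple off the boundaries between the five pieces.
theorem zagierMap_pos {x y z : ℤ} (hx : 0 < x) (hy : 0 < y) (hz : 0 < z)
    (hxo : x % 2 = 1) (hyo : y % 2 = 1) (hzo : z % 2 = 1) :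
    0 < (zagierMap (x, y, z)).1 ∧ 0 < (zagierMap (x, y, z)).2.1 ∧
      0 < (zagierMap (x, y, z)).2.2 := by
  rw [zagierMap]
  split_ifs <;> dsimp only <;> omega

theorem zagierMap_zagierMap {x y z : ℤ} (hx : 0 < x) (hz : 0 < z) :
    zagierMap (zagierMap (x, y, z)) = (x, y, z) := by
  rw [zagierMap.eq_1 x y z]
  split_ifs <;> rw [zagierMap] <;> split_ifs <;> simp only [Prod.mk.injEq, and_true, true_and] <;>
    omega

theorem zagierMap_eq_self_iff {x y z : ℤ} (hx : 0 < x) (hz : 0 < z)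
    (hxo : x % 2 = 1) (hyo : y % 2 = 1) (hzo : z % 2 = 1) :
    zagierMap (x, y, z) = (x, y, z) ↔ x = y ∨ y = 2 * x + z := by
  rw [zagierMap]
  split_ifs <;> simp only [Prod.mk.injEq, true_and] <;> omega

noncomputable def zagierSet (N : ℕ) : Finset (ℤ × ℤ × ℤ) :=
  {u ∈ Icc 1 (N : ℤ) ×ˢ Icc 1 (N : ℤ) ×ˢ Icc 1 (N : ℤ) | u.1 ^ 2 + 2 * u.2.1 * u.2.2 = N}

theorem mem_zagierSet {N : ℕ} {x y z : ℤ} :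
    (x, y, z) ∈ zagierSet N ↔ 0 < x ∧ 0 < y ∧ 0 < z ∧ x ^ 2 + 2 * y * z = N := by
  simp only [zagierSet, mem_filter, mem_product, mem_Icc]
  constructor
  · rintro ⟨⟨⟨hx, -⟩, ⟨hy, -⟩, ⟨hz, -⟩⟩, hN⟩
    exact ⟨hx, hy, hz, hN⟩
  · rintro ⟨hx, hy, hz, hN⟩
    refine ⟨⟨⟨hx, ?_⟩, ⟨hy, ?_⟩, ⟨hz, ?_⟩⟩, hN⟩ <;> nlinarith

theorem ncard_sq_add_two_mul_sq_eq (N : ℕ) :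
    {cd : ℕ × ℕ | 0 < cd.1 ∧ 0 < cd.2 ∧ N = cd.1 ^ 2 + 2 * cd.2 ^ 2}.ncard =
      #{u ∈ zagierSet N | u.2.1 = u.2.2} := by
  rw [← Set.ncard_coe_finset]
  refine Set.ncard_congr (fun cd _ => ((cd.1 : ℤ), (cd.2 : ℤ), (cd.2 : ℤ))) ?_ ?_ ?_
  · rintro ⟨c, d⟩ ⟨hc, hd, hN⟩
    simp only [coe_filter, Set.mem_ofPred_eq, mem_zagierSet, and_true]
    refine ⟨by exact_mod_cast hc, by exact_mod_cast hd, by exact_mod_cast hd, ?_⟩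
    rw [hN]; push_cast; ring
  · rintro ⟨c, d⟩ ⟨c', d'⟩ - - h
    simpa using h
  · rintro ⟨x, y, z⟩ hu
    simp only [coe_filter, Set.mem_ofPred_eq] at hu
    obtain ⟨hu, rfl : y = z⟩ := hu
    obtain ⟨hx, hy, -, hN⟩ := mem_zagierSet.1 hu
    lift x to ℕ using hx.le
    lift y to ℕ using hy.le
    refine ⟨(x, y), ⟨by exact_mod_cast hx, by exact_mod_cast hy, ?_⟩, rfl⟩
    show N = x ^ 2 + 2 * y ^ 2
    zify
    linear_combination -hN

theorem card_divisorsAntidiagonal_filter_lt_eq {N : ℕ} (hN : N % 2 = 1) :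
    #{p ∈ N.divisorsAntidiagonal | p.1 < p.2} = #{u ∈ zagierSet N | u.1 = u.2.1} := by
  have odd_of_mul_eq {a b : ℕ} (h : a * b = N) : a % 2 = 1 ∧ b % 2 = 1 := by
    have := Nat.odd_mul.1 (h ▸ Nat.odd_iff.2 hN)
    exact ⟨Nat.odd_iff.1 this.1, Nat.odd_iff.1 this.2⟩
  refine card_bij (fun p _ => ((p.1 : ℤ), (p.1 : ℤ), ((p.2 : ℤ) - p.1) / 2)) ?_ ?_ ?_
  · rintro ⟨a, b⟩ hp
    obtain ⟨⟨hab, -⟩, hlt⟩ := by simpa only [mem_filter, Nat.mem_divisorsAntidiagonal] using hp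
    obtain ⟨ha, hb⟩ := odd_of_mul_eq hab
    have hsub : 2 * (((b : ℤ) - a) / 2) = b - a := by omega
    refine mem_filter.2 ⟨mem_zagierSet.2 ⟨by omega, by omega, by omega, ?_⟩, rfl⟩
    rw [← hab]; push_cast
    linear_combination (a : ℤ) * hsub
  · rintro ⟨a, b⟩ hp ⟨a', b'⟩ hp' h
    simp only [mem_filter, Nat.mem_divisorsAntidiagonal] at hp hp'
    have := odd_of_mul_eq hp.1.1
    have := odd_of_mul_eq hp'.1.1
    simp only [Prod.mk.injEq] at h ⊢
    omega
  · rintro ⟨x, y, z⟩ hu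
    obtain ⟨hu, rfl : x = y⟩ := mem_filter.1 hu
    obtain ⟨hx, -, hz, hN⟩ := mem_zagierSet.1 hu
    lift x to ℕ using hx.le
    lift z to ℕ using hz.le
    refine ⟨(x, x + 2 * z), ?_, by simp⟩
    simp only [mem_filter, Nat.mem_divisorsAntidiagonal]
    refine ⟨⟨?_, by omega⟩, by omega⟩
    zify
    linear_combination hN

theorem card_zagierSet_filter_snd_eq_modEq (N : ℕ) :
    #{u ∈ zagierSet N | u.2.1 = u.2.2} ≡ #(zagierSet N) [MOD 2] := by
  have hswap := card_filter_fixed_modEq_two (zagierSet N) (g := fun u => (u.1, u.2.2, u.2.1))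
    (fun ⟨x, y, z⟩ hu => by
      obtain ⟨hx, hy, hz, hN⟩ := mem_zagierSet.1 hu
      exact mem_zagierSet.2 ⟨hx, hz, hy, by linear_combination hN⟩)
    (fun _ _ => rfl)
  convert hswap using 3 with u
  simp only [Prod.ext_iff, true_and]
  exact ⟨fun h => ⟨h.symm, h⟩, And.right⟩

theorem emod_two_eq_one_of_mem_zagierSet {N : ℕ} (h : N % 4 = 3) {x y z : ℤ}
    (hu : (x, y, z) ∈ zagierSet N) : x % 2 = 1 ∧ y % 2 = 1 ∧ z % 2 = 1 := by
  obtain ⟨-, -, -, hN⟩ := mem_zagierSet.1 hu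
  exact Int.emod_two_eq_one_of_sq_add_two_mul_emod_four (by omega)

theorem zagierMap_mem_zagierSet {N : ℕ} (h : N % 4 = 3) {u : ℤ × ℤ × ℤ}
    (hu : u ∈ zagierSet N) :
    zagierMap u ∈ zagierSet N := by
  obtain ⟨x, y, z⟩ := u
  obtain ⟨hx, hy, hz, hN⟩ := mem_zagierSet.1 hu
  obtain ⟨hxo, hyo, hzo⟩ := emod_two_eq_one_of_mem_zagierSet h hu
  obtain ⟨hx', hy', hz'⟩ := zagierMap_pos hx hy hz hxo hyo hzo
  exact mem_zagierSet.2 ⟨hx', hy', hz', (zagierMap_sq_add_two_mul x y z).trans hN⟩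

theorem card_zagierSet_filter_fst_eq_modEq {N : ℕ} (h : N % 8 = 3) :
    #{u ∈ zagierSet N | u.1 = u.2.1} ≡ #(zagierSet N) [MOD 2] := by
  have h4 : N % 4 = 3 := by omega
  have hzag := card_filter_fixed_modEq_two (zagierSet N) (fun _ => zagierMap_mem_zagierSet h4)
    (fun ⟨_, _, _⟩ hu => by
      obtain ⟨hx, -, hz, -⟩ := mem_zagierSet.1 hu
      exact zagierMap_zagierMap hx hz)
  convert hzag using 3 with u hu
  obtain ⟨x, y, z⟩ := u
  obtain ⟨hx, -, hz, hN⟩ := mem_zagierSet.1 hu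
  obtain ⟨hxo, hyo, hzo⟩ := emod_two_eq_one_of_mem_zagierSet h4 hu
  rw [zagierMap_eq_self_iff hx hz hxo hyo hzo, or_iff_left]
  rintro rfl
  apply Int.sq_sub_two_mul_sq_emod_eight_ne_three (x + 2 * z) z
  rw [show (x + 2 * z) ^ 2 - 2 * z ^ 2 = N by linear_combination hN]
  omega

theorem card_reps_sq_add_two_sq_mod_two_general (N : ℕ) (h : N % 8 = 3) :
    {cd : ℕ × ℕ | 0 < cd.1 ∧ 0 < cd.2 ∧ N = cd.1 ^ 2 + 2 * cd.2 ^ 2}.ncard % 2 =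
      N.divisors.card / 2 % 2 := by
  have hsq : ¬ IsSquare N := fun ⟨r, hr⟩ => by
    apply Int.sq_sub_two_mul_sq_emod_eight_ne_three r 0
    rw [show (r : ℤ) ^ 2 - 2 * 0 ^ 2 = N by rw [hr]; push_cast; ring]
    omega
  rw [ncard_sq_add_two_mul_sq_eq, Nat.card_divisors_eq_two_mul_card_filter_lt hsq,
    Nat.mul_div_cancel_left _ two_pos, card_divisorsAntidiagonal_filter_lt_eq (by omega)]
  exact (card_zagierSet_filter_snd_eq_modEq N).trans (card_zagierSet_filter_fst_eq_modEq h).symm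

theorem card_reps_sq_add_two_sq_mod_two (N : ℕ) (hN : 0 < N) (h : N % 8 = 3) :
    {cd : ℕ × ℕ | 0 < cd.1 ∧ 0 < cd.2 ∧ N = cd.1 ^ 2 + 2 * cd.2 ^ 2}.ncard % 2 =
      N.divisors.card / 2 % 2 :=
  card_reps_sq_add_two_sq_mod_two_general N h
end
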